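/- Let ε ≥ δ > 0. The set of aperiodic (ε,δ)-Delone sets in ℝⁿ contains a countable intersection of open dense subsets of the space Del_{ε,δ} of all (ε,δ)-Delone sets equipped with the local rubber topology; i.e., aperiodicity is topologically generic in Del_{ε,δ}. -/

import Mathlib

/-!
Call a translation `v` robustly excluded for `S` if it moves some point of a fixed ball a
definite distance `η` away from `S`. For each `k`, the Delone sets for which every `v` with
`1/(k+1) ≤ ‖v‖ ≤ k+1` is robustly excluded form an open set, since the witness survives small
rubber perturbations, and a set lying in all of them is aperiodic.

These sets are dense by surgery: keep the given set near the origin, plant a marker far away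
and fill the rest by a maximal `δ`-separated extension. The marker is a maximal `δ`-separated
set `A ∋ 0, δe` scaled by `c > 1`, so that all its distances are at least `cδ`, with the point
`c • δe` pulled back to `δe`. Then `{0, δe}` is the only pair at distance `< (c+1)δ/2` near the
marker, so a translation by `v` with `η ≤ ‖v‖ ≤ k+1` cannot move both points of this pair
close to the set. On a compact ball the covering radius of `A` is uniformly `< δ`, which leaves
room for `c > 1` while the covering radius of the marker stays `< δ ≤ ε`.
-/

open Metric Pointwise

/-- `S` is `δ`-separated. -/
def IsSeparated' {n : ℕ} (δ : ℝ) (S : Set (EuclideanSpace ℝ (Fin n))) : Prop :=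
  ∀ x ∈ S, ∀ y ∈ S, x ≠ y → δ ≤ dist x y

/-- `S` is an `(ε,δ)`-Delone subset of ℝⁿ: `ε`-relatively dense and `δ`-separated. -/
def IsDelone {n : ℕ} (ε δ : ℝ) (S : Set (EuclideanSpace ℝ (Fin n))) : Prop :=
  (∀ x : EuclideanSpace ℝ (Fin n), ∃ y ∈ S, dist x y ≤ ε) ∧ IsSeparated' δ S

/-- The space of `(ε,δ)`-Delone subsets of ℝⁿ. -/
def Del (n : ℕ) (ε δ : ℝ) : Set (Set (EuclideanSpace ℝ (Fin n))) :=
  {S | IsDelone ε δ S}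

/-- The basic entourage `N_r` of the local rubber uniformity. -/
def Nrel (n : ℕ) (r : ℝ) (S S' : Set (EuclideanSpace ℝ (Fin n))) : Prop :=
  S ∩ ball (0 : EuclideanSpace ℝ (Fin n)) r ⊆ S' + ball (0 : EuclideanSpace ℝ (Fin n)) (1 / r) ∧
  S' ∩ ball (0 : EuclideanSpace ℝ (Fin n)) r ⊆ S + ball (0 : EuclideanSpace ℝ (Fin n)) (1 / r)

/-- The translate `S - v` of `S`. -/
def tr {n : ℕ} (v : EuclideanSpace ℝ (Fin n)) (S : Set (EuclideanSpace ℝ (Fin n))) :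
    Set (EuclideanSpace ℝ (Fin n)) :=
  (fun x => x - v) '' S

/-- `S` is aperiodic: no nonzero translation fixes it. -/
def IsAperiodicSet {n : ℕ} (S : Set (EuclideanSpace ℝ (Fin n))) : Prop :=
  ∀ v : EuclideanSpace ℝ (Fin n), v ≠ 0 → tr v S ≠ S

/-- `S` is periodic: its translation symmetry group is a cocompact lattice, i.e. it contains
`n` linearly independent periods. -/
def IsPeriodicSet {n : ℕ} (S : Set (EuclideanSpace ℝ (Fin n))) : Prop :=
  ∃ v : Fin n → EuclideanSpace ℝ (Fin n), LinearIndependent ℝ v ∧ ∀ i, tr (v i) S = S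

/-- `S'` belongs to the hull (closure of the translation orbit) of `S`:
every basic rubber neighbourhood of `S'` meets the orbit of `S`. -/
def InHull {n : ℕ} (S S' : Set (EuclideanSpace ℝ (Fin n))) : Prop :=
  ∀ r : ℝ, 0 < r → ∃ v : EuclideanSpace ℝ (Fin n), Nrel n r (tr v S) S'

/-- `S` is almost chaotic: periodic Delone sets are dense in the hull of `S`. -/
def IsAlmostChaotic {n : ℕ} (ε δ : ℝ) (S : Set (EuclideanSpace ℝ (Fin n))) : Prop :=
  ∀ S' ∈ Del n ε δ, InHull S S' → ∀ r : ℝ, 0 < r →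
    ∃ P ∈ Del n ε δ, IsPeriodicSet P ∧ InHull S P ∧ Nrel n r S' P

/-- `F` is an open subset of `Del n ε δ` in the local rubber topology. -/
def IsOpenInDel (n : ℕ) (ε δ : ℝ) (F : Set (Set (EuclideanSpace ℝ (Fin n)))) : Prop :=
  ∀ S ∈ F, ∃ r : ℝ, 0 < r ∧ ∀ S' ∈ Del n ε δ, Nrel n r S S' → S' ∈ F

/-- `F` is dense in `Del n ε δ` in the local rubber topology. -/
def IsDenseInDel (n : ℕ) (ε δ : ℝ) (F : Set (Set (EuclideanSpace ℝ (Fin n)))) : Prop :=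
  ∀ S ∈ Del n ε δ, ∀ r : ℝ, 0 < r → ∃ S' ∈ F, Nrel n r S S'

open Set

theorem IsCompact.exists_lt_forall_exists_dist_lt {α : Type*} [PseudoMetricSpace α]
    {K A : Set α} {δ : ℝ} (hK : IsCompact K) (h : ∀ x ∈ K, ∃ a ∈ A, dist x a < δ) :
    ∃ s < δ, ∀ x ∈ K, ∃ a ∈ A, dist x a < s := by
  rcases K.eq_empty_or_nonempty with rfl | hKne
  · exact ⟨δ - 1, by linarith, by simp⟩
  obtain ⟨x₀, hx₀, hmax⟩ := hK.exists_isMaxOn hKne (continuous_infDist_pt A).continuousOn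
  obtain ⟨a₀, ha₀, hx₀a₀⟩ := h x₀ hx₀
  have hA : A.Nonempty := ⟨a₀, ha₀⟩
  have hx₀δ : infDist x₀ A < δ := (infDist_lt_iff hA).2 ⟨a₀, ha₀, hx₀a₀⟩
  refine ⟨(infDist x₀ A + δ) / 2, by linarith, fun x hx => (infDist_lt_iff hA).1 ?_⟩
  linarith [show infDist x A ≤ infDist x₀ A from hmax hx]

theorem half_one_add_mul_norm_le_norm_sub_smul {E : Type*} [NormedAddCommGroup E]
    [InnerProductSpace ℝ E] {y u : E} {θ : ℝ} (h₀ : ‖u‖ ≤ ‖y‖) (h₁ : ‖u‖ ≤ ‖y - u‖)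
    (hθ₀ : 0 ≤ θ) (hθ₁ : θ ≤ 1) : (1 + θ) / 2 * ‖u‖ ≤ ‖y - θ • u‖ := by
  have hexp : ‖y - θ • u‖ ^ 2 = ‖y‖ ^ 2 - 2 * θ * inner ℝ y u + θ ^ 2 * ‖u‖ ^ 2 := by
    rw [norm_sub_sq_real, inner_smul_right, norm_smul, Real.norm_of_nonneg hθ₀]
    ring
  have hsq₀ := pow_le_pow_left₀ (norm_nonneg u) h₀ 2
  have hsq₁ := pow_le_pow_left₀ (norm_nonneg u) h₁ 2
  rw [norm_sub_sq_real] at hsq₁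
  -- `θ ↦ ‖y‖² - 2θ⟪y,u⟫` is affine and `≥ ‖u‖²`, resp. `≥ 0`, at `θ = 0`, resp. `θ = 1`
  have haffine : (1 - θ) * ‖u‖ ^ 2 ≤ ‖y‖ ^ 2 - 2 * θ * inner ℝ y u := by
    nlinarith [mul_le_mul_of_nonneg_left hsq₀ (sub_nonneg.2 hθ₁),
      mul_nonneg hθ₀ (sub_nonneg.2 hsq₁)]
  refine (pow_le_pow_iff_left₀ (by positivity) (norm_nonneg _) two_ne_zero).1 ?_
  rw [hexp]
  nlinarith [mul_nonneg (sq_nonneg (1 - θ)) (sq_nonneg ‖u‖)]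

theorem exists_mem_pair_forall_le_dist_sub_of_isolated {E : Type*} [SeminormedAddCommGroup E]
    [NormedSpace ℝ E] {S : Set E} {p q v : E} {η K : ℝ} (hpq : 2 * η ≤ dist p q)
    (hpair : ∀ a ∈ S ∩ ball p K, ∀ b ∈ S ∩ ball p K, a ≠ b → dist a b < dist p q + 2 * η →
      s(a, b) = s(p, q))
    (hv : η ≤ ‖v‖) (hvK : ‖v‖ + dist p q + η ≤ K) :
    ∃ s ∈ ({p, q} : Set E), ∀ y ∈ S, η ≤ dist (s - v) y := by
  by_contra! hclose
  obtain ⟨a, haS, hpa⟩ := hclose p (by simp)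
  obtain ⟨b, hbS, hqb⟩ := hclose q (by simp)
  have hshift : ∀ x : E, dist (x - v) x = ‖v‖ := fun x => by
    rw [dist_eq_norm, sub_sub_cancel_left, norm_neg]
  have hpq' : dist (p - v) (q - v) = dist p q := dist_sub_right p q v
  have ha : a ∈ S ∩ ball p K := ⟨haS, by
    rw [mem_ball]
    linarith [dist_nonneg (x := p) (y := q), dist_triangle a (p - v) p, dist_comm a (p - v),
      hshift p]⟩
  have hb : b ∈ S ∩ ball p K := ⟨hbS, by
    rw [mem_ball]
    linarith [dist_triangle4 b (q - v) q p, dist_comm b (q - v), hshift q, dist_comm q p]⟩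
  have hab : a ≠ b := by
    rintro rfl
    linarith [dist_triangle (p - v) a (q - v), dist_comm a (q - v)]
  have hdab : dist a b < dist p q + 2 * η := by
    linarith [dist_triangle4 a (p - v) (q - v) b, dist_comm a (p - v)]
  rcases Sym2.eq_iff.1 (hpair a ha b hb hab hdab) with ⟨rfl, -⟩ | ⟨rfl, rfl⟩
  · linarith [hshift a]
  · have h2v : ‖(2 : ℝ) • v‖ < 2 * η := by
      calc ‖(2 : ℝ) • v‖ = ‖(a - v - b) + (b - v - a)‖ := by
            rw [← norm_neg, two_smul]; congr 1; abel
        _ ≤ dist (a - v) b + dist (b - v) a := by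
            rw [dist_eq_norm, dist_eq_norm]; exact norm_add_le _ _
        _ < 2 * η := by linarith
    rw [norm_smul, Real.norm_two] at h2v
    linarith

def IsAperiodicOnShell {E : Type*} [SeminormedAddCommGroup E] (k : ℕ) (S : Set E) : Prop :=
  ∃ η > 0, ∃ R, ∀ v : E, 1 / ((k : ℝ) + 1) ≤ ‖v‖ → ‖v‖ ≤ k + 1 →
    ∃ s ∈ S, ‖s‖ < R ∧ ∀ y ∈ S, η ≤ dist (s - v) y

theorem isAperiodicOnShell_of_isolated_pair {E : Type*} [SeminormedAddCommGroup E]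
    [NormedSpace ℝ E] {S : Set E} {p q : E} {d K : ℝ} (k : ℕ) (hp : p ∈ S) (hq : q ∈ S)
    (hpq : 0 < dist p q) (hd : dist p q < d) (hK : k + dist p q + 2 ≤ K)
    (hpair : ∀ a ∈ S ∩ ball p K, ∀ b ∈ S ∩ ball p K, a ≠ b → dist a b < d →
      s(a, b) = s(p, q)) :
    IsAperiodicOnShell k S := by
  set η := min (1 / ((k : ℝ) + 1)) (min (dist p q / 2) ((d - dist p q) / 2))
  have hη : 0 < η := lt_min (by positivity) (lt_min (by positivity) (by linarith))
  have hη₁ : η ≤ 1 / ((k : ℝ) + 1) := min_le_left _ _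
  have hηpq : η ≤ dist p q / 2 := (min_le_right _ _).trans (min_le_left _ _)
  have hηd : η ≤ (d - dist p q) / 2 := (min_le_right _ _).trans (min_le_right _ _)
  have hη1 : η ≤ 1 := hη₁.trans (div_le_one_of_le₀ (by linarith [k.cast_nonneg (α := ℝ)])
    (by positivity))
  refine ⟨η, hη, max ‖p‖ ‖q‖ + 1, fun v hv₁ hv₂ => ?_⟩
  obtain ⟨s, hs, hfar⟩ := exists_mem_pair_forall_le_dist_sub_of_isolated (by linarith)
    (fun a ha b hb hab hdab => hpair a ha b hb hab (by linarith)) (hη₁.trans hv₁)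
    (by linarith)
  rcases hs with rfl | rfl
  · exact ⟨s, hp, by linarith [le_max_left ‖s‖ ‖q‖], hfar⟩
  · exact ⟨s, hq, by linarith [le_max_right ‖p‖ ‖s‖], hfar⟩

theorem exists_nat_one_div_le_and_le {x : ℝ} (hx : 0 < x) :
    ∃ k : ℕ, 1 / ((k : ℝ) + 1) ≤ x ∧ x ≤ k + 1 := by
  obtain ⟨k, hk⟩ := exists_nat_ge (max x x⁻¹)
  refine ⟨k, ?_, by linarith [le_max_left x x⁻¹]⟩
  rw [one_div, inv_le_comm₀ (by positivity) hx]
  linarith [le_max_right x x⁻¹]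

section Euclidean

variable {n : ℕ}

local notation "E" => EuclideanSpace ℝ (Fin n)

theorem IsSeparated'.exists_maximal_extension {δ : ℝ} (hδ : 0 < δ) {base : Set E}
    (hbase : IsSeparated' δ base) (Ω : Set E) :
    ∃ A, base ⊆ A ∧ A ⊆ base ∪ Ω ∧ IsSeparated' δ A ∧ ∀ x ∈ Ω, ∃ y ∈ A, dist x y < δ := by
  let 𝒮 : Set (Set E) := {A | base ⊆ A ∧ A ⊆ base ∪ Ω ∧ IsSeparated' δ A}
  have hchain : ∀ c ⊆ 𝒮, IsChain (· ⊆ ·) c → c.Nonempty → ∃ ub ∈ 𝒮, ∀ s ∈ c, s ⊆ ub := by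
    intro c hc hchain ⟨t, ht⟩
    refine ⟨⋃₀ c, ⟨(hc ht).1.trans (subset_sUnion_of_mem ht),
      sUnion_subset fun s hs => (hc hs).2.1, ?_⟩, fun s => subset_sUnion_of_mem⟩
    exact hchain.pairwise_sUnion.2 fun s hs => (hc hs).2.2
  obtain ⟨A, hbaseA, hAmax⟩ := zorn_subset_nonempty 𝒮 hchain base ⟨subset_rfl, subset_union_left,
    hbase⟩
  obtain ⟨-, hAΩ, hAsep⟩ := hAmax.prop
  refine ⟨A, hbaseA, hAΩ, hAsep, fun x hx => ?_⟩
  by_contra! hfar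
  have hinsert : insert x A ∈ 𝒮 := by
    refine ⟨hbaseA.trans (subset_insert x A), insert_subset (Or.inr hx) hAΩ, ?_⟩
    exact pairwise_insert.2 ⟨hAsep, fun y hy _ => ⟨hfar y hy, dist_comm x y ▸ hfar y hy⟩⟩
  have hxA : x ∈ A := hAmax.eq_of_subset hinsert (subset_insert x A) ▸ mem_insert x A
  linarith [hfar x hxA, dist_self x]

def pairMarker (A : Set E) (w e : E) (δ c : ℝ) : Set E :=
  insert (w + δ • e) ((w + c • ·) '' (A \ {δ • e}))

theorem pairMarker_eq_or_le_dist {A : Set E} {w e : E} {δ c : ℝ} (hA : IsSeparated' δ A)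
    (h₀ : 0 ∈ A) (hδe : δ • e ∈ A) (hδ : 0 ≤ δ) (he : ‖e‖ = 1) (hc : 1 ≤ c) :
    ∀ a ∈ pairMarker A w e δ c, ∀ b ∈ pairMarker A w e δ c, a ≠ b →
      s(a, b) = s(w, w + δ • e) ∨ (c + 1) * δ / 2 ≤ dist a b := by
  have hc₀ : 0 < c := by linarith
  have hmoved : ∀ β ∈ A \ {δ • e}, β ≠ 0 → (c + 1) * δ / 2 ≤ dist (w + δ • e) (w + c • β) := by
    rintro β ⟨hβ, hβe⟩ hβ₀
    have hu : ‖c • δ • e‖ = c * δ := by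
      rw [norm_smul, norm_smul, he, Real.norm_of_nonneg hc₀.le, Real.norm_of_nonneg hδ, mul_one]
    have h₀ : ‖c • δ • e‖ ≤ ‖c • β‖ := by
      rw [hu, norm_smul, Real.norm_of_nonneg hc₀.le, ← dist_zero_right]
      exact mul_le_mul_of_nonneg_left (hA β hβ 0 h₀ hβ₀) hc₀.le
    have h₁ : ‖c • δ • e‖ ≤ ‖c • β - c • δ • e‖ := by
      rw [hu, ← smul_sub, norm_smul, Real.norm_of_nonneg hc₀.le, ← dist_eq_norm]
      exact mul_le_mul_of_nonneg_left (hA β hβ _ hδe hβe) hc₀.le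
    have key := half_one_add_mul_norm_le_norm_sub_smul h₀ h₁ (inv_nonneg.2 hc₀.le)
      (inv_le_one_of_one_le₀ hc)
    rw [inv_smul_smul₀ hc₀.ne', hu, ← dist_eq_norm, ← dist_add_left w, dist_comm] at key
    calc (c + 1) * δ / 2 = (1 + c⁻¹) / 2 * (c * δ) := by field_simp
      _ ≤ _ := key
  rintro a (rfl | ⟨α, hα, rfl⟩) b (rfl | ⟨β, hβ, rfl⟩) hab
  · exact absurd rfl hab
  · by_cases hβ₀ : β = 0
    · subst hβ₀; exact Or.inl (by simp only [smul_zero, add_zero, Sym2.eq_swap])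
    · exact Or.inr (hmoved β hβ hβ₀)
  · by_cases hα₀ : α = 0
    · subst hα₀; exact Or.inl (by simp only [smul_zero, add_zero])
    · exact Or.inr (dist_comm (w + δ • e) _ ▸ hmoved α hα hα₀)
  · have hαβ : α ≠ β := by rintro rfl; exact hab rfl
    right
    rw [dist_add_left, dist_smul₀, Real.norm_of_nonneg hc₀.le]
    nlinarith [hA α hα.1 β hβ.1 hαβ]

theorem pairMarker_cover {A : Set E} {w e : E} {δ c L s : ℝ}
    (hA : ∀ z ∈ closedBall 0 L, ∃ a ∈ A, dist z a < s)
    (hδ : 0 ≤ δ) (he : ‖e‖ = 1) (hc : 1 ≤ c) (hcs : c * (s + δ) ≤ 2 * δ) :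
    ∀ x ∈ closedBall w L, ∃ y ∈ pairMarker A w e δ c, dist x y < δ := by
  intro x hx
  have hc₀ : 0 < c := by linarith
  set z := c⁻¹ • (x - w)
  have hxz : x = w + c • z := by rw [smul_inv_smul₀ hc₀.ne', add_sub_cancel]
  have hz : z ∈ closedBall 0 L := by
    rw [mem_closedBall_zero_iff, norm_smul, norm_inv, Real.norm_of_nonneg hc₀.le,
      ← dist_eq_norm]
    exact (mul_le_of_le_one_left dist_nonneg (inv_le_one_of_one_le₀ hc)).trans hx
  obtain ⟨a, ha, hza⟩ := hA z hz
  have hxa : dist x (w + c • a) < c * s := by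
    rw [hxz, dist_add_left, dist_smul₀, Real.norm_of_nonneg hc₀.le]
    exact mul_lt_mul_of_pos_left hza hc₀
  by_cases hae : a = δ • e
  · refine ⟨w + δ • e, mem_insert _ _, ?_⟩
    have hmove : dist (w + c • a) (w + δ • e) = (c - 1) * δ := by
      rw [hae, dist_add_left, dist_eq_norm, smul_smul, ← sub_smul, norm_smul, he, mul_one,
        Real.norm_of_nonneg (by nlinarith)]
      ring
    linarith [dist_triangle x (w + c • a) (w + δ • e)]
  · exact ⟨w + c • a, mem_insert_of_mem _ ⟨a, ⟨ha, hae⟩, rfl⟩, by nlinarith⟩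

theorem exists_isolated_pair {δ : ℝ} (hδ : 0 < δ) {e : E} (he : ‖e‖ = 1) (w : E) (L : ℝ) :
    ∃ Λ : Set E, ∃ d > δ, IsSeparated' δ Λ ∧ w ∈ Λ ∧ w + δ • e ∈ Λ ∧
      (∀ x ∈ closedBall w L, ∃ y ∈ Λ, dist x y < δ) ∧
      ∀ a ∈ Λ, ∀ b ∈ Λ, a ≠ b → dist a b < d → s(a, b) = s(w, w + δ • e) := by
  have hδe : ‖δ • e‖ = δ := by rw [norm_smul, he, mul_one, Real.norm_of_nonneg hδ.le]
  have hbase : IsSeparated' δ {0, δ • e} := by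
    rintro x (rfl | rfl) y (rfl | rfl) hxy <;> first
      | exact absurd rfl hxy
      | simp [hδe, dist_comm (0 : E)]
  obtain ⟨A, hbaseA, -, hAsep, hAcov⟩ := hbase.exists_maximal_extension hδ univ
  obtain ⟨s, hsδ, hs⟩ := (isCompact_closedBall (0 : E) L).exists_lt_forall_exists_dist_lt
    fun z _ => hAcov z (mem_univ z)
  -- the largest scale that `pairMarker_cover` allows
  set t := max s 0
  have htδ : t < δ := max_lt hsδ hδ
  set c := 2 * δ / (t + δ)
  have htδ₀ : 0 < t + δ := by positivity
  have hc : 1 < c := (one_lt_div htδ₀).2 (by linarith)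
  have hct : c * (t + δ) = 2 * δ := div_mul_cancel₀ _ htδ₀.ne'
  have hpair := pairMarker_eq_or_le_dist (w := w) hAsep (hbaseA (by simp)) (hbaseA (by simp))
    hδ.le he hc.le
  refine ⟨pairMarker A w e δ c, (c + 1) * δ / 2, by nlinarith, ?_, ?_, mem_insert _ _, ?_, ?_⟩
  · intro a ha b hb hab
    rcases hpair a ha b hb hab with h | h
    · rcases Sym2.eq_iff.1 h with ⟨rfl, rfl⟩ | ⟨rfl, rfl⟩ <;> simp [hδe]
    · nlinarith
  · refine mem_insert_of_mem _ ⟨0, ⟨hbaseA (by simp), ?_⟩, by simp⟩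
    simp [eq_comm, hδ.ne', ← norm_eq_zero, hδe]
  · exact pairMarker_cover (fun z hz => (hs z hz).imp fun a ha => ⟨ha.1, ha.2.trans_le
      (le_max_left s 0)⟩) hδ.le he hc.le (by nlinarith [le_max_left s 0])
  · intro a ha b hb hab hdab
    exact (hpair a ha b hb hab).resolve_right (not_le.2 hdab)

theorem Nrel.symm {r : ℝ} {S S' : Set E} (h : Nrel n r S S') : Nrel n r S' S :=
  ⟨h.2, h.1⟩

theorem Nrel.exists_dist_lt {r : ℝ} {S S' : Set E} (h : Nrel n r S S') {x : E} (hx : x ∈ S)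
    (hxr : ‖x‖ < r) : ∃ x' ∈ S', dist x x' < 1 / r := by
  obtain ⟨x', hx', b, hb, rfl⟩ := h.1 ⟨hx, mem_ball_zero_iff.2 hxr⟩
  exact ⟨x', hx', by simpa using hb⟩

theorem nrel_of_inter_ball_subset {r : ℝ} {S S' : Set E} (h₁ : S ∩ ball 0 r ⊆ S')
    (h₂ : S' ∩ ball 0 r ⊆ S) : Nrel n r S S' := by
  have key : ∀ {T T' : Set E}, T ∩ ball 0 r ⊆ T' → T ∩ ball 0 r ⊆ T' + ball 0 (1 / r) := by
    intro T T' h x hx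
    have hr : 0 < r := (norm_nonneg x).trans_lt (mem_ball_zero_iff.1 hx.2)
    exact ⟨x, h hx, 0, mem_ball_self (one_div_pos.2 hr), add_zero x⟩
  exact ⟨key h₁, key h₂⟩

theorem Nrel.exists_far {r η R : ℝ} {S S' : Set E} {s v : E} (h : Nrel n r S S') (hη : 0 < η)
    (hr : R + ‖v‖ + 2 * η ≤ r) (hrη : 1 / r ≤ η / 4) (hs : s ∈ S) (hsR : ‖s‖ < R)
    (hfar : ∀ y ∈ S, η ≤ dist (s - v) y) :
    ∃ s' ∈ S', ‖s'‖ < R + η ∧ ∀ y ∈ S', η / 2 ≤ dist (s' - v) y := by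
  obtain ⟨s', hs', hss'⟩ := h.exists_dist_lt hs (by linarith [norm_nonneg v])
  have hs'R : ‖s'‖ < R + η := by
    linarith [norm_le_norm_add_norm_sub' s' s, dist_eq_norm s' s, dist_comm s s']
  refine ⟨s', hs', hs'R, fun y' hy' => ?_⟩
  by_contra! hclose
  have hy'r : ‖y'‖ < r := by
    have := norm_le_norm_add_norm_sub' y' (s' - v)
    linarith [norm_sub_le s' v, dist_eq_norm y' (s' - v), dist_comm y' (s' - v)]
  obtain ⟨y, hy, hy'y⟩ := h.symm.exists_dist_lt hy' hy'r
  linarith [hfar y hy, dist_triangle4 (s - v) (s' - v) y' y, dist_sub_right s s' v]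

theorem IsSeparated'.union {δ : ℝ} {A B : Set E} (hA : IsSeparated' δ A) (hB : IsSeparated' δ B)
    (hAB : ∀ a ∈ A, ∀ b ∈ B, δ ≤ dist a b) : IsSeparated' δ (A ∪ B) := by
  rintro x (hx | hx) y (hy | hy) hxy
  · exact hA x hx y hy hxy
  · exact hAB x hx y hy
  · exact dist_comm x y ▸ hAB y hy x hx
  · exact hB x hx y hy hxy

theorem exists_delone_between {ε δ : ℝ} (hδ : 0 < δ) (hδε : δ ≤ ε) {base Ω : Set E}
    (hbase : IsSeparated' δ base) (hcov : ∀ x ∉ Ω, ∃ y ∈ base, dist x y ≤ ε) :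
    ∃ S' ∈ Del n ε δ, base ⊆ S' ∧ S' ⊆ base ∪ Ω := by
  obtain ⟨S', hbaseS', hS'sub, hS'sep, hS'cov⟩ := hbase.exists_maximal_extension hδ Ω
  refine ⟨S', ⟨fun x => ?_, hS'sep⟩, hbaseS', hS'sub⟩
  by_cases hx : x ∈ Ω
  · obtain ⟨y, hy, hxy⟩ := hS'cov x hx
    exact ⟨y, hy, by linarith⟩
  · obtain ⟨y, hy, hxy⟩ := hcov x hx
    exact ⟨y, hbaseS' hy, hxy⟩

theorem exists_delone_patch {ε δ r K : ℝ} (hδ : 0 < δ) (hδε : δ ≤ ε) {S Λ : Set E} {w : E}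
    (hS : S ∈ Del n ε δ) (hΛ : IsSeparated' δ Λ) (hΛcov : ∀ x ∈ ball w K, ∃ y ∈ Λ, dist x y < δ)
    (hw : r + ε + K + 2 * δ ≤ ‖w‖) :
    ∃ S' ∈ Del n ε δ, Nrel n r S S' ∧ S' ∩ ball w K = Λ ∩ ball w K := by
  have hfar : ∀ x y : E, ‖w‖ - ‖x‖ - dist y w ≤ dist x y := fun x y => by
    linarith [dist_triangle4 w y x 0, dist_zero_right x, dist_zero_right w, dist_comm w y,
      dist_comm x y]
  have hbase : IsSeparated' δ (S ∩ closedBall 0 (r + ε) ∪ Λ ∩ ball w (K + δ)) := by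
    refine IsSeparated'.union (fun x hx y hy => hS.2 x hx.1 y hy.1)
      (fun x hx y hy => hΛ x hx.1 y hy.1) ?_
    rintro x ⟨-, hx⟩ y ⟨-, hy⟩
    rw [mem_closedBall_zero_iff] at hx; rw [mem_ball] at hy
    linarith [hfar x y]
  obtain ⟨S', hS', hbaseS', hS'sub⟩ := exists_delone_between hδ hδε hbase
    (Ω := {x | r ≤ ‖x‖ ∧ K ≤ dist x w}) fun x hx => by
      by_cases hxr : ‖x‖ < r
      · obtain ⟨y, hy, hxy⟩ := hS.1 x
        refine ⟨y, Or.inl ⟨hy, ?_⟩, hxy⟩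
        rw [mem_closedBall_zero_iff]
        linarith [norm_le_norm_add_norm_sub' y x, dist_eq_norm y x, dist_comm x y]
      · have hxw : dist x w < K := not_le.1 fun hxw => hx ⟨not_lt.1 hxr, hxw⟩
        obtain ⟨y, hy, hxy⟩ := hΛcov x hxw
        refine ⟨y, Or.inr ⟨hy, ?_⟩, by linarith⟩
        rw [mem_ball]
        linarith [dist_triangle y x w, dist_comm x y]
  refine ⟨S', hS', nrel_of_inter_ball_subset ?_ ?_, ?_⟩
  · rintro x ⟨hxS, hx⟩
    refine hbaseS' (Or.inl ⟨hxS, ?_⟩)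
    rw [mem_ball_zero_iff] at hx; rw [mem_closedBall_zero_iff]
    linarith
  · rintro x ⟨hxS', hx⟩
    rw [mem_ball_zero_iff] at hx
    rcases hS'sub hxS' with (⟨hxS, -⟩ | ⟨-, hxw⟩) | ⟨hxr, -⟩
    · exact hxS
    · rw [mem_ball] at hxw
      linarith [hfar x x, dist_self x]
    · linarith
  · ext x
    refine ⟨fun ⟨hxS', hxw⟩ => ⟨?_, hxw⟩, fun ⟨hxΛ, hxw⟩ => ⟨hbaseS' (Or.inr ⟨hxΛ, ?_⟩), hxw⟩⟩
    · rw [mem_ball] at hxw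
      rcases hS'sub hxS' with (⟨-, hx⟩ | ⟨hxΛ, -⟩) | ⟨-, hxK⟩
      · rw [mem_closedBall_zero_iff] at hx
        linarith [hfar x w, dist_self w]
      · exact hxΛ
      · linarith
    · exact ball_subset_ball (by linarith) hxw

theorem IsAperiodicOnShell.tr_ne {k : ℕ} {S : Set E} (h : IsAperiodicOnShell k S) {v : E}
    (hv₁ : 1 / ((k : ℝ) + 1) ≤ ‖v‖) (hv₂ : ‖v‖ ≤ k + 1) : tr v S ≠ S := by
  obtain ⟨η, hη, R, hS⟩ := h
  obtain ⟨s, hs, -, hfar⟩ := hS v hv₁ hv₂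
  intro hper
  have hsv : s - v ∈ S := hper ▸ ⟨s, hs, rfl⟩
  linarith [hfar _ hsv, dist_self (s - v)]

theorem isOpenInDel_aperiodicOnShell (ε δ : ℝ) (k : ℕ) :
    IsOpenInDel n ε δ (Del n ε δ ∩ {S | IsAperiodicOnShell k S}) := by
  rintro S ⟨-, η, hη, R, hS⟩
  set r := max (R + k + 1 + 2 * η) (4 / η)
  have hr : 0 < r := lt_max_of_lt_right (by positivity)
  have hrη : 1 / r ≤ η / 4 :=
    calc 1 / r ≤ 1 / (4 / η) := one_div_le_one_div_of_le (by positivity) (le_max_right _ _)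
      _ = η / 4 := one_div_div 4 η
  refine ⟨r, hr, fun S' hS' hN => ⟨hS', η / 2, half_pos hη, R + η, fun v hv₁ hv₂ => ?_⟩⟩
  obtain ⟨s, hs, hsR, hfar⟩ := hS v hv₁ hv₂
  exact hN.exists_far hη (by linarith [le_max_left (R + k + 1 + 2 * η) (4 / η)]) hrη hs hsR hfar

theorem isDenseInDel_aperiodicOnShell {ε δ : ℝ} (hδ : 0 < δ) (hδε : δ ≤ ε) (k : ℕ) :
    IsDenseInDel n ε δ (Del n ε δ ∩ {S | IsAperiodicOnShell k S}) := by
  intro S hS r hr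
  by_cases hunit : ∃ e : E, ‖e‖ = 1
  swap
  · -- this is `n = 0`, where every shell is empty
    push Not at hunit
    refine ⟨S, ⟨hS, 1, one_pos, 0, fun v hv₁ _ => ?_⟩,
      nrel_of_inter_ball_subset inter_subset_left inter_subset_left⟩
    have hv : v ≠ 0 := norm_pos_iff.1 (lt_of_lt_of_le (by positivity) hv₁)
    exact absurd (norm_smul_inv_norm (𝕜 := ℝ) hv) (hunit _)
  obtain ⟨e, he⟩ := hunit
  set K := (k : ℝ) + δ + 2 with hKdef
  have hK : 0 < K := by positivity
  set w := (r + ε + K + 2 * δ) • e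
  have hw : ‖w‖ = r + ε + K + 2 * δ := by
    rw [norm_smul, he, mul_one, Real.norm_of_nonneg (by linarith)]
  obtain ⟨Λ, d, hdδ, hΛsep, hwΛ, hqΛ, hΛcov, hΛpair⟩ := exists_isolated_pair hδ he w K
  obtain ⟨S', hS', hN, hS'Λ⟩ := exists_delone_patch hδ hδε hS hΛsep
    (fun x hx => hΛcov x (ball_subset_closedBall hx)) hw.ge
  have hpq : dist w (w + δ • e) = δ := by
    rw [dist_self_add_right, norm_smul, he, mul_one, Real.norm_of_nonneg hδ.le]
  have hqK : w + δ • e ∈ ball w K := by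
    rw [mem_ball, dist_comm, hpq]; linarith [k.cast_nonneg (α := ℝ)]
  refine ⟨S', ⟨hS', isAperiodicOnShell_of_isolated_pair k (hS'Λ.ge ⟨hwΛ, mem_ball_self hK⟩).1
    (hS'Λ.ge ⟨hqΛ, hqK⟩).1 (by rwa [hpq]) (by rwa [hpq]) (by rw [hpq]) fun a ha b hb =>
      hΛpair a (hS'Λ ▸ ha).1 b (hS'Λ ▸ hb).1⟩, hN⟩

end Euclidean

/-- Aperiodicity is generic in `Del_{ε,δ}` for `ε ≥ δ > 0`: the aperiodic Delone sets contain
a countable intersection of open dense subsets. -/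
theorem aperiodic_generic (n : ℕ) (ε δ : ℝ) (hδ : 0 < δ) (hεδ : δ ≤ ε) :
    ∃ F : ℕ → Set (Set (EuclideanSpace ℝ (Fin n))),
      (∀ k, F k ⊆ Del n ε δ ∧ IsOpenInDel n ε δ (F k) ∧ IsDenseInDel n ε δ (F k)) ∧
      ∀ S, (∀ k, S ∈ F k) → S ∈ Del n ε δ ∧ IsAperiodicSet S := by
  refine ⟨fun k => Del n ε δ ∩ {S | IsAperiodicOnShell k S}, fun k => ⟨inter_subset_left,
    isOpenInDel_aperiodicOnShell ε δ k, isDenseInDel_aperiodicOnShell hδ hεδ k⟩,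
    fun S hS => ⟨(hS 0).1, fun v hv => ?_⟩⟩
  obtain ⟨k, hk₁, hk₂⟩ := exists_nat_one_div_le_and_le (norm_pos_iff.2 hv)
  exact (hS k).2.tr_ne hk₁ hk₂
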